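/- Let {u_1, …, u_n} be a b-orthogonal basis of U consisting of common eigenvectors of f_1, …, f_{k−1}. Then the elements e_i = (u_i, 0, …, 0) for 1 ≤ i ≤ n together with e_{n+j} = (0, …, 0, 1, 0, …, 0) (with the 1 in the j-th scalar slot) for 1 ≤ j ≤ k form a natural basis of E = E(U, b, f_1, …, f_{k−1}): e_i e_j = 0 for i ≠ j, e_i² = Σ_{j=1}^k λ_{ij} e_{n+j} for i = 1, …, n, where λ_{i1} = b(u_i, u_i) and λ_{ij} = b(f_{j−1}(u_i), u_i) for j = 2, …, k, e_i² = e_{i+1} for i = n+1, …, n+k−1, and e_{n+k}² = 0. In particular E is an evolution algebra. -/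

import Mathlib

variable {F : Type*} [Field F] {A : Type*} [AddCommGroup A] [Module F A]

/-- For a bilinear multiplication `mul` on `A` and a submodule `S`, the preimage in `A` of the
annihilator of `A/S`, i.e. `{x | x·A ⊆ S and A·x ⊆ S}`. -/
def annSucc (mul : A →ₗ[F] A →ₗ[F] A) (S : Submodule F A) : Submodule F A where
  carrier := {x | ∀ y : A, mul x y ∈ S ∧ mul y x ∈ S}
  zero_mem' := by intro y; simp
  add_mem' := by
    intro a b ha hb y
    refine ⟨?_, ?_⟩
    · simpa [map_add, LinearMap.add_apply] using S.add_mem (ha y).1 (hb y).1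
    · simpa [map_add, LinearMap.add_apply] using S.add_mem (ha y).2 (hb y).2
  smul_mem' := by
    intro c a ha y
    refine ⟨?_, ?_⟩
    · simpa [map_smul, LinearMap.smul_apply] using S.smul_mem c (ha y).1
    · simpa [map_smul, LinearMap.smul_apply] using S.smul_mem c (ha y).2

/-- The upper annihilating series: `annSeq mul 0 = 0`, and
`annSeq mul (i+1)` is the preimage in `A` of `ann(A / annSeq mul i)`. -/
def annSeq (mul : A →ₗ[F] A →ₗ[F] A) : ℕ → Submodule F A
  | 0 => ⊥
  | i + 1 => annSucc mul (annSeq mul i)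

/-- A basis is natural if the product of distinct basis vectors vanishes. -/
def IsNaturalBasis {ι : Type*} (mul : A →ₗ[F] A →ₗ[F] A) (e : Module.Basis ι F A) : Prop :=
  ∀ i j, i ≠ j → mul (e i) (e j) = 0

/-- An evolution algebra: a commutative algebra admitting a natural basis. -/
def IsEvolutionAlgebra (mul : A →ₗ[F] A →ₗ[F] A) : Prop :=
  (∀ x y, mul x y = mul y x) ∧ ∃ (n : ℕ) (e : Module.Basis (Fin n) F A), IsNaturalBasis mul e

/-- The (nilpotent) algebra `(A, mul)` has type `[n_1, …, n_r]`:  `r` is the least index with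
`ann^r(A) = A` and `n_i = dim ann^i(A) - dim ann^{i-1}(A)`. -/
def HasType (mul : A →ₗ[F] A →ₗ[F] A) (L : List ℕ) : Prop :=
  annSeq mul L.length = ⊤ ∧ (∀ j < L.length, annSeq mul j ≠ ⊤) ∧
  ∀ (i : ℕ) (h : i < L.length),
    L.get ⟨i, h⟩ =
      Module.finrank F (annSeq mul (i + 1)) - Module.finrank F (annSeq mul i)


/-- The candidate natural basis of `E(U,b,f_1,…,f_{k-1}) = U × F^k` (with `k = m+1`):
`e_i = (u_i, 0)` for `i < n` and `e_{n+j} = (0, δ_j)` for `j < k`. -/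
def naturalFamilyE (m n : ℕ) {U : Type*} [AddCommGroup U] [Module F U]
    (u : Fin n → U) : Fin (n + (m + 1)) → U × (Fin (m + 1) → F) :=
  Fin.addCases (fun i => (u i, 0)) (fun j => (0, Pi.single j 1))

/-! In the basis `(u_i, 0), (0, ε_j)` every product has zero `U`-component. For `i ≠ j` the
remaining entries `b(u_i, u_j)` and `b(f_p u_i, u_j) = μ b(u_i, u_j)` vanish because `u` is
orthogonal and consists of eigenvectors, and `ε_i ε_j = 0` unless `i = j < k`, when it is
`ε_{j+1}`. Commutativity is the symmetry of `b` and of the `f_p`. -/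

namespace EUbf

variable {U : Type*} [AddCommGroup U] [Module F U] {m : ℕ}

/-- The product of `E(U, b, f_1, …, f_{k-1}) = U × F^k`, with `k = m + 1`. -/
def prod (b : U →ₗ[F] U →ₗ[F] F) (f : Fin m → U →ₗ[F] U)
    (x y : U × (Fin (m + 1) → F)) : U × (Fin (m + 1) → F) :=
  (0, Fin.cases (motive := fun _ => F) (b x.1 y.1)
    (fun j : Fin m => b (f j x.1) y.1 + x.2 j.castSucc * y.2 j.castSucc))

variable (b : U →ₗ[F] U →ₗ[F] F) (f : Fin m → U →ₗ[F] U)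

theorem prod_comm (hbsymm : ∀ x y : U, b x y = b y x)
    (hfsymm : ∀ (i : Fin m) (x y : U), b (f i x) y = b x (f i y))
    (x y : U × (Fin (m + 1) → F)) : prod b f x y = prod b f y x := by
  refine Prod.ext rfl (funext fun q => ?_)
  induction q using Fin.cases with
  | zero => exact hbsymm x.1 y.1
  | succ p =>
    simp only [prod, Fin.cases_succ]
    rw [hfsymm, hbsymm x.1, mul_comm]

theorem prod_vec_vec (x y : U) :
    prod b f (x, 0) (y, 0) =
      (0, Fin.cases (motive := fun _ => F) (b x y) (fun p : Fin m => b (f p x) y)) := by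
  simp [prod]

theorem prod_vec_vec_eq_zero {x y : U} (hxy : b x y = 0)
    (heig : ∀ p, ∃ μ : F, f p x = μ • x) :
    prod b f (x, 0) (y, 0) = 0 := by
  rw [prod_vec_vec]
  refine Prod.ext rfl (funext fun q => ?_)
  induction q using Fin.cases with
  | zero => exact hxy
  | succ p =>
    obtain ⟨μ, hμ⟩ := heig p
    simp [hμ, hxy]

theorem prod_vec_scalar (x : U) (β : Fin (m + 1) → F) : prod b f (x, 0) (0, β) = 0 := by
  refine Prod.ext rfl (funext fun q => ?_)
  induction q using Fin.cases <;> simp [prod]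

theorem prod_scalar_vec (α : Fin (m + 1) → F) (y : U) : prod b f (0, α) (y, 0) = 0 := by
  refine Prod.ext rfl (funext fun q => ?_)
  induction q using Fin.cases <;> simp [prod]

theorem prod_scalar_scalar (α β : Fin (m + 1) → F) :
    prod b f (0, α) (0, β) =
      (0, Fin.cases (motive := fun _ => F) 0
        (fun j : Fin m => α j.castSucc * β j.castSucc)) := by
  simp [prod]

theorem prod_single_single_of_ne {i j : Fin (m + 1)} (hij : i ≠ j) :
    prod b f (0, Pi.single i 1) (0, Pi.single j 1) = 0 := by
  rw [prod_scalar_scalar]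
  refine Prod.ext rfl (funext fun q => ?_)
  induction q using Fin.cases with
  | zero => rfl
  | succ p =>
    by_cases hp : p.castSucc = i
    · simp [Pi.single_apply, hp, hij]
    · simp [Pi.single_apply, hp]

theorem prod_single_castSucc (j : Fin m) :
    prod b f (0, Pi.single j.castSucc 1) (0, Pi.single j.castSucc 1) =
      (0, Pi.single j.succ 1) := by
  rw [prod_scalar_scalar]
  refine Prod.ext rfl (funext fun q => ?_)
  induction q using Fin.cases with
  | zero => simp [Fin.succ_ne_zero]
  | succ p => by_cases h : p = j <;> simp [h, Pi.single_apply]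

theorem prod_single_last :
    prod b f (0, Pi.single (Fin.last m) 1) (0, Pi.single (Fin.last m) 1) = 0 := by
  rw [prod_scalar_scalar]
  refine Prod.ext rfl (funext fun q => ?_)
  induction q using Fin.cases with
  | zero => rfl
  | succ p => simp

variable (m) {n : ℕ}

noncomputable def naturalBasis (u : Module.Basis (Fin n) F U) :
    Module.Basis (Fin (n + (m + 1))) F (U × (Fin (m + 1) → F)) :=
  (u.prod (Pi.basisFun F (Fin (m + 1)))).reindex finSumFinEquiv

theorem coe_naturalBasis (u : Module.Basis (Fin n) F U) :
    ⇑(naturalBasis m u) = naturalFamilyE m n u := by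
  funext i
  induction i using Fin.addCases <;> simp [naturalBasis, naturalFamilyE]

variable {m}

theorem prod_naturalFamilyE_of_ne (u : Fin n → U)
    (horth : ∀ i j : Fin n, i ≠ j → b (u i) (u j) = 0)
    (heig : ∀ (p : Fin m) (i : Fin n), ∃ μ : F, f p (u i) = μ • u i)
    {i j : Fin (n + (m + 1))} (hij : i ≠ j) :
    prod b f (naturalFamilyE m n u i) (naturalFamilyE m n u j) = 0 := by
  induction i using Fin.addCases with
  | left i =>
    induction j using Fin.addCases with
    | left j =>
      simpa [naturalFamilyE] using
        prod_vec_vec_eq_zero b f (horth i j (by rintro rfl; exact hij rfl)) (heig · i)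
    | right j => simpa [naturalFamilyE] using prod_vec_scalar b f (u i) (Pi.single j 1)
  | right i =>
    induction j using Fin.addCases with
    | left j => simpa [naturalFamilyE] using prod_scalar_vec b f (Pi.single i 1) (u j)
    | right j =>
      simpa [naturalFamilyE] using prod_single_single_of_ne b f (by rintro rfl; exact hij rfl)

end EUbf

theorem EUbf_naturalBasis_general
    {U : Type*} [AddCommGroup U] [Module F U]
    (n : ℕ)
    (b : U →ₗ[F] U →ₗ[F] F)
    (hbsymm : ∀ x y : U, b x y = b y x)
    (m : ℕ)  -- the number of scalar factors is `k = m + 1`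
    (f : Fin m → U →ₗ[F] U)
    (hfsymm : ∀ (i : Fin m) (x y : U), b (f i x) y = b x (f i y))
    (u : Module.Basis (Fin n) F U)
    (horth : ∀ i j : Fin n, i ≠ j → b (u i) (u j) = 0)
    (heig : ∀ (p : Fin m) (i : Fin n), ∃ μ : F, f p (u i) = μ • u i)
    (mul : (U × (Fin (m + 1) → F)) →ₗ[F] (U × (Fin (m + 1) → F)) →ₗ[F] (U × (Fin (m + 1) → F)))
    (hmul : ∀ (x y : U) (α β : Fin (m + 1) → F),
      mul (x, α) (y, β) =
        (0, Fin.cases (motive := fun _ => F) (b x y)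
            (fun j : Fin m => b (f j x) y + α j.castSucc * β j.castSucc))) :
    LinearIndependent F (naturalFamilyE (F := F) m n u) ∧
    Submodule.span F (Set.range (naturalFamilyE (F := F) m n u)) = ⊤ ∧
    (∀ i j : Fin (n + (m + 1)), i ≠ j →
      mul (naturalFamilyE (F := F) m n u i) (naturalFamilyE (F := F) m n u j) = 0) ∧
    (∀ i : Fin n,
      mul ((u i, 0) : U × (Fin (m + 1) → F)) (u i, 0) =
        (0, Fin.cases (motive := fun _ => F) (b (u i) (u i))
            (fun p : Fin m => b (f p (u i)) (u i)))) ∧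
    (∀ j : Fin m,
      mul (((0 : U), Pi.single j.castSucc (1 : F)) : U × (Fin (m + 1) → F))
          ((0 : U), Pi.single j.castSucc (1 : F)) =
        ((0 : U), Pi.single j.succ (1 : F))) ∧
    mul (((0 : U), Pi.single (Fin.last m) (1 : F)) : U × (Fin (m + 1) → F))
        ((0 : U), Pi.single (Fin.last m) (1 : F)) = 0 ∧
    IsEvolutionAlgebra mul := by
  have hmul' : ∀ x y, mul x y = EUbf.prod b f x y := fun x y => hmul x.1 y.1 x.2 y.2
  simp only [IsEvolutionAlgebra, IsNaturalBasis, hmul']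
  have natural : ∀ i j, i ≠ j →
      EUbf.prod b f (naturalFamilyE m n u i) (naturalFamilyE m n u j) = 0 :=
    fun i j => EUbf.prod_naturalFamilyE_of_ne b f u horth heig
  refine ⟨EUbf.coe_naturalBasis m u ▸ (EUbf.naturalBasis m u).linearIndependent,
    EUbf.coe_naturalBasis m u ▸ (EUbf.naturalBasis m u).span_eq, natural,
    fun i => EUbf.prod_vec_vec b f (u i) (u i), EUbf.prod_single_castSucc b f,
    EUbf.prod_single_last b f, EUbf.prod_comm b f hbsymm hfsymm,
    n + (m + 1), EUbf.naturalBasis m u, ?_⟩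
  rw [EUbf.coe_naturalBasis]
  exact natural

/-- If `{u_1,…,u_n}` is a `b`-orthogonal basis of `U` of common eigenvectors of
the `f_i`'s, then the `e_i`'s form a natural basis of `E = E(U,b,f_1,…,f_{k-1})` (here `k = m+1`),
with `e_i e_j = 0` for `i ≠ j`, `e_i² = Σ_j λ_{ij} e_{n+j}` (`λ_{i1} = b(u_i,u_i)`,
`λ_{ij} = b(f_{j-1} u_i, u_i)` for `j ≥ 2`), `e_i² = e_{i+1}` for `n+1 ≤ i ≤ n+k-1`, and
`e_{n+k}² = 0`.  In particular `E` is an evolution algebra. -/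
theorem EUbf_naturalBasis
    (h2 : (2 : F) ≠ 0)
    {U : Type*} [AddCommGroup U] [Module F U] [FiniteDimensional F U]
    (n : ℕ) (hdimU : Module.finrank F U = n)
    (b : U →ₗ[F] U →ₗ[F] F)
    (hbsymm : ∀ x y : U, b x y = b y x)
    (hbnd : ∀ x : U, (∀ y : U, b x y = 0) → x = 0)
    (m : ℕ)  -- the number of scalar factors is `k = m + 1`
    (f : Fin m → U →ₗ[F] U)
    (hfcomm : ∀ i j, (f i).comp (f j) = (f j).comp (f i))
    (hfsymm : ∀ (i : Fin m) (x y : U), b (f i x) y = b x (f i y))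
    (u : Module.Basis (Fin n) F U)
    (horth : ∀ i j : Fin n, i ≠ j → b (u i) (u j) = 0)
    (heig : ∀ (p : Fin m) (i : Fin n), ∃ μ : F, f p (u i) = μ • u i)
    (mul : (U × (Fin (m + 1) → F)) →ₗ[F] (U × (Fin (m + 1) → F)) →ₗ[F] (U × (Fin (m + 1) → F)))
    (hmul : ∀ (x y : U) (α β : Fin (m + 1) → F),
      mul (x, α) (y, β) =
        (0, Fin.cases (motive := fun _ => F) (b x y)
            (fun j : Fin m => b (f j x) y + α j.castSucc * β j.castSucc))) :
    LinearIndependent F (naturalFamilyE (F := F) m n u) ∧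
    Submodule.span F (Set.range (naturalFamilyE (F := F) m n u)) = ⊤ ∧
    (∀ i j : Fin (n + (m + 1)), i ≠ j →
      mul (naturalFamilyE (F := F) m n u i) (naturalFamilyE (F := F) m n u j) = 0) ∧
    (∀ i : Fin n,
      mul ((u i, 0) : U × (Fin (m + 1) → F)) (u i, 0) =
        (0, Fin.cases (motive := fun _ => F) (b (u i) (u i))
            (fun p : Fin m => b (f p (u i)) (u i)))) ∧
    (∀ j : Fin m,
      mul (((0 : U), Pi.single j.castSucc (1 : F)) : U × (Fin (m + 1) → F))
          ((0 : U), Pi.single j.castSucc (1 : F)) =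
        ((0 : U), Pi.single j.succ (1 : F))) ∧
    mul (((0 : U), Pi.single (Fin.last m) (1 : F)) : U × (Fin (m + 1) → F))
        ((0 : U), Pi.single (Fin.last m) (1 : F)) = 0 ∧
    IsEvolutionAlgebra mul :=
  EUbf_naturalBasis_general n b hbsymm m f hfsymm u horth heig mul hmul
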